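/- Let U, T, X, Y be discrete random variables with X conditionally independent of (T, Y) given U, and let Y* satisfy P(Y*=y | X=x', U=u) = P(Y*=y | U=u) = P(Y=y | T=t', U=u) for all relevant u, y. Assume P(T=t' | U=u) > 0 for all u with P(U=u)>0 and P(X=x') > 0. Then E[Y* | X=x'] = E[ Y · 1{T=t', X=x'} / (P(T=t' | U) · P(X=x')) ]. -/

import Mathlib

open scoped Classical
noncomputable section

variable {Ω : Type*} [Fintype Ω]

/-- Probability of an event under a weight function `p`. -/
def Pr (p : Ω → ℝ) (A : Set Ω) : ℝ := ∑ ω, if ω ∈ A then p ω else 0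

/-- Conditional probability `P(A | B)`. -/
def cPr (p : Ω → ℝ) (A B : Set Ω) : ℝ := Pr p (A ∩ B) / Pr p B

/-- Expectation. -/
def Ex (p : Ω → ℝ) (Y : Ω → ℝ) : ℝ := ∑ ω, p ω * Y ω

/-- Conditional expectation given an event. -/
def cEx (p : Ω → ℝ) (Y : Ω → ℝ) (A : Set Ω) : ℝ :=
  (∑ ω, if ω ∈ A then p ω * Y ω else 0) / Pr p A

/-- `p` is a probability mass function on `Ω`. -/
def IsProb (p : Ω → ℝ) : Prop := (∀ ω, 0 ≤ p ω) ∧ ∑ ω, p ω = 1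

/-!
Split both sides over the fibres `{U = u}`. On a fibre with `P(X = x', U = u) > 0` the valuation
hypothesis gives `Y*` given `(X = x', U = u)` the law of `Y` given `(T = t', U = u)`, so its
contribution to the left side is `P(X = x', U = u) · E[Y; T = t', U = u] / P(T = t', U = u)`.
Conditional independence gives
`E[Y; X = x', T = t', U = u] = P(X = x' | U = u) · E[Y; T = t', U = u]`, and dividing by the
propensity `P(T = t' | U = u)` yields the same quantity. Fibres with `P(X = x', U = u) = 0` carry
no mass on either side.
-/

section Lemmas

variable {p : Ω → ℝ}

lemma Pr_eq_sum_indicator (p : Ω → ℝ) (A : Set Ω) : Pr p A = ∑ ω, A.indicator p ω := rfl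

lemma Pr_nonneg (hp : ∀ ω, 0 ≤ p ω) (A : Set Ω) : 0 ≤ Pr p A :=
  Finset.sum_nonneg fun ω _ => Set.indicator_nonneg (fun ω _ => hp ω) ω

lemma Pr_mono (hp : ∀ ω, 0 ≤ p ω) {A B : Set Ω} (h : A ⊆ B) : Pr p A ≤ Pr p B :=
  Finset.sum_le_sum fun ω _ => Set.indicator_le_indicator_of_subset h hp ω

lemma Ex_indicator_eq_zero_of_Pr_eq_zero (hp : ∀ ω, 0 ≤ p ω) {A B : Set Ω}
    (hA : Pr p A = 0) (hBA : B ⊆ A) (f : Ω → ℝ) : Ex p (B.indicator f) = 0 := by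
  have hpA : ∀ ω ∈ A, p ω = 0 := fun ω hω => by
    have := (Finset.sum_eq_zero_iff_of_nonneg fun ω _ =>
      Set.indicator_nonneg (fun ω _ => hp ω) ω).1 hA ω (Finset.mem_univ ω)
    rwa [Set.indicator_of_mem hω] at this
  refine Finset.sum_eq_zero fun ω _ => ?_
  by_cases hω : ω ∈ B
  · rw [hpA ω (hBA hω), zero_mul]
  · rw [Set.indicator_of_notMem hω, mul_zero]

lemma Ex_indicator_const (p : Ω → ℝ) (A : Set Ω) (c : ℝ) :
    Ex p (A.indicator fun _ => c) = c * Pr p A := by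
  simp only [Ex, Pr_eq_sum_indicator, Finset.mul_sum, Set.indicator_apply]
  exact Finset.sum_congr rfl fun ω _ => by split_ifs <;> ring

lemma Ex_div_const (p f : Ω → ℝ) (c : ℝ) : Ex p (fun ω => f ω / c) = Ex p f / c := by
  simp only [Ex, Finset.sum_div, mul_div_assoc]

lemma cEx_eq_Ex_indicator_div (p f : Ω → ℝ) (A : Set Ω) :
    cEx p f A = Ex p (A.indicator f) / Pr p A := by
  simp only [cEx, Ex, Set.indicator_apply, mul_ite, mul_zero]

lemma Ex_eq_sum_fiberwise {ι : Type*} (p g : Ω → ℝ) (U : Ω → ι) (V : Finset ι)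
    (hV : ∀ ω, U ω ∈ V) : Ex p g = ∑ u ∈ V, Ex p ({ω | U ω = u}.indicator g) := by
  rw [Ex, ← Finset.sum_fiberwise_of_maps_to fun ω _ => hV ω]
  refine Finset.sum_congr rfl fun u _ => ?_
  rw [Ex, Finset.sum_filter]
  refine Finset.sum_congr rfl fun ω _ => ?_
  by_cases h : U ω = u <;> simp [h]

lemma Ex_div_comp_eq_sum_fiberwise {ι : Type*} (p g : Ω → ℝ) (U : Ω → ι) (w : ι → ℝ)
    (V : Finset ι) (hV : ∀ ω, U ω ∈ V) :
    Ex p (fun ω => g ω / w (U ω)) = ∑ u ∈ V, Ex p ({ω | U ω = u}.indicator g) / w u := by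
  rw [Ex_eq_sum_fiberwise p _ U V hV]
  refine Finset.sum_congr rfl fun u _ => ?_
  rw [← Ex_div_const]
  congr 1
  ext ω
  by_cases h : U ω = u <;> simp [h]

lemma Ex_indicator_eq_sum_mul_Pr (p f : Ω → ℝ) (A : Set Ω) (V : Finset ℝ)
    (hV : ∀ ω, f ω ∈ V) : Ex p (A.indicator f) = ∑ y ∈ V, y * Pr p ({ω | f ω = y} ∩ A) := by
  rw [Ex_eq_sum_fiberwise p _ f V hV]
  refine Finset.sum_congr rfl fun y _ => ?_
  rw [Set.indicator_indicator, ← Ex_indicator_const]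
  congr 1
  ext ω
  by_cases h : ω ∈ {ω | f ω = y} ∩ A
  · simp only [Set.indicator_of_mem h, h.1.out]
  · simp only [Set.indicator_of_notMem h]

lemma cEx_eq_sum_mul_cPr (p f : Ω → ℝ) (A : Set Ω) (V : Finset ℝ) (hV : ∀ ω, f ω ∈ V) :
    cEx p f A = ∑ y ∈ V, y * cPr p {ω | f ω = y} A := by
  simp only [cEx_eq_Ex_indicator_div, Ex_indicator_eq_sum_mul_Pr p f A V hV, Finset.sum_div,
    cPr, mul_div_assoc]

lemma cEx_congr_of_cPr_eq (p f g : Ω → ℝ) (A B : Set Ω)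
    (h : ∀ y, cPr p {ω | g ω = y} A = cPr p {ω | f ω = y} B) : cEx p g A = cEx p f B := by
  have hV : ∀ ω, f ω ∈ Finset.univ.image f ∪ Finset.univ.image g ∧
      g ω ∈ Finset.univ.image f ∪ Finset.univ.image g := fun ω =>
    ⟨Finset.mem_union_left _ (Finset.mem_image_of_mem f (Finset.mem_univ ω)),
      Finset.mem_union_right _ (Finset.mem_image_of_mem g (Finset.mem_univ ω))⟩
  rw [cEx_eq_sum_mul_cPr p g A _ fun ω => (hV ω).2, cEx_eq_sum_mul_cPr p f B _ fun ω => (hV ω).1]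
  simp only [h]

lemma Ex_indicator_inter_eq_cPr_mul (p f : Ω → ℝ) {B C E : Set Ω} (hE : Pr p E ≠ 0)
    (hCI : ∀ y, cPr p (C ∩ B ∩ {ω | f ω = y}) E = cPr p C E * cPr p (B ∩ {ω | f ω = y}) E) :
    Ex p ((E ∩ (C ∩ B)).indicator f) = cPr p C E * Ex p ((B ∩ E).indicator f) := by
  have hV : ∀ ω, f ω ∈ Finset.univ.image f := fun ω =>
    Finset.mem_image_of_mem f (Finset.mem_univ ω)
  rw [Ex_indicator_eq_sum_mul_Pr p f _ _ hV, Ex_indicator_eq_sum_mul_Pr p f _ _ hV, Finset.mul_sum]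
  refine Finset.sum_congr rfl fun y _ => ?_
  have hjoint : Pr p ({ω | f ω = y} ∩ (E ∩ (C ∩ B))) =
      cPr p C E * Pr p ({ω | f ω = y} ∩ (B ∩ E)) := by
    have h := hCI y
    rw [cPr, cPr, cPr, div_eq_iff hE] at h
    rw [show {ω | f ω = y} ∩ (E ∩ (C ∩ B)) = C ∩ B ∩ {ω | f ω = y} ∩ E by
        ext; simp only [Set.mem_inter_iff]; tauto,
      show {ω | f ω = y} ∩ (B ∩ E) = B ∩ {ω | f ω = y} ∩ E by
        ext; simp only [Set.mem_inter_iff]; tauto, h, cPr]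
    field_simp
  rw [hjoint, mul_left_comm]

lemma Ex_indicator_eq_Ex_indicator_div_cPr (hp : ∀ ω, 0 ≤ p ω) (f g : Ω → ℝ) {B C E : Set Ω}
    (hCI : 0 < Pr p E → ∀ y,
      cPr p (C ∩ B ∩ {ω | f ω = y}) E = cPr p C E * cPr p (B ∩ {ω | f ω = y}) E)
    (hcons : 0 < Pr p (C ∩ E) → ∀ y, cPr p {ω | g ω = y} (C ∩ E) = cPr p {ω | f ω = y} (B ∩ E)) :
    Ex p ((E ∩ C).indicator g) = Ex p ((E ∩ (C ∩ B)).indicator f) / cPr p B E := by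
  rcases (Pr_nonneg hp (C ∩ E)).eq_or_lt with hCE | hCE
  · rw [Ex_indicator_eq_zero_of_Pr_eq_zero hp hCE.symm (Set.inter_comm E C).subset,
      Ex_indicator_eq_zero_of_Pr_eq_zero hp hCE.symm (fun ω h => ⟨h.2.1, h.1⟩), zero_div]
  have hE : 0 < Pr p E := hCE.trans_le (Pr_mono hp Set.inter_subset_right)
  have hg : Ex p ((E ∩ C).indicator g) = Pr p (C ∩ E) * cEx p g (C ∩ E) := by
    rw [cEx_eq_Ex_indicator_div, Set.inter_comm E C, mul_div_cancel₀ _ hCE.ne']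
  rw [hg, cEx_congr_of_cPr_eq p f g _ _ (hcons hCE), cEx_eq_Ex_indicator_div,
    Ex_indicator_inter_eq_cPr_mul p f hE.ne' (hCI hE), cPr, cPr, Set.inter_comm B E]
  field_simp

end Lemmas

theorem stmt8_general {ιU ιT ιX : Type*} (p : Ω → ℝ) (hp : IsProb p)
    (U : Ω → ιU) (T : Ω → ιT) (X : Ω → ιX) (Y Ystar : Ω → ℝ)
    (t' : ιT) (x' : ιX)
    -- X conditionally independent of (T, Y) given U
    (hCI : ∀ (u : ιU) (x : ιX) (t : ιT) (y : ℝ), Pr p {ω | U ω = u} > 0 →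
      cPr p ({ω | X ω = x} ∩ {ω | T ω = t} ∩ {ω | Y ω = y}) {ω | U ω = u} =
      cPr p {ω | X ω = x} {ω | U ω = u} *
        cPr p ({ω | T ω = t} ∩ {ω | Y ω = y}) {ω | U ω = u})
    -- individual-level valuation for the counterfactual outcome Y*
    (hconsist : ∀ (u : ιU), Pr p ({ω | X ω = x'} ∩ {ω | U ω = u}) > 0 → ∀ y : ℝ,
      cPr p {ω | Ystar ω = y} ({ω | X ω = x'} ∩ {ω | U ω = u}) =
        cPr p {ω | Ystar ω = y} {ω | U ω = u} ∧
      cPr p {ω | Ystar ω = y} {ω | U ω = u} =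
        cPr p {ω | Y ω = y} ({ω | T ω = t'} ∩ {ω | U ω = u})) :
    cEx p Ystar {ω | X ω = x'} =
      Ex p (fun ω => Y ω * (if T ω = t' ∧ X ω = x' then 1 else 0) /
        (cPr p {ω' | T ω' = t'} {ω' | U ω' = U ω} * Pr p {ω' | X ω' = x'})) := by
  have hfiber (u : ιU) := Ex_indicator_eq_Ex_indicator_div_cPr hp.1 Y Ystar
    (fun hU y => hCI u x' t' y hU) fun hXU y => (hconsist u hXU y).1.trans (hconsist u hXU y).2
  have hU : ∀ ω, U ω ∈ Finset.univ.image U := fun ω =>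
    Finset.mem_image_of_mem U (Finset.mem_univ ω)
  have hipw : (fun ω => Y ω * (if T ω = t' ∧ X ω = x' then 1 else 0) /
      (cPr p {ω' | T ω' = t'} {ω' | U ω' = U ω} * Pr p {ω' | X ω' = x'})) =
      fun ω => ({ω | X ω = x'} ∩ {ω | T ω = t'}).indicator Y ω /
        (cPr p {ω' | T ω' = t'} {ω' | U ω' = U ω} * Pr p {ω' | X ω' = x'}) := by
    ext ω
    by_cases hT : T ω = t' <;> by_cases hX : X ω = x' <;> simp [hT, hX]
  rw [cEx_eq_Ex_indicator_div, ← Ex_div_const, hipw,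
    Ex_div_comp_eq_sum_fiberwise p _ U (fun _ => _) _ hU,
    Ex_div_comp_eq_sum_fiberwise p _ U
      (fun u => cPr p {ω' | T ω' = t'} {ω' | U ω' = u} * Pr p {ω' | X ω' = x'}) _ hU]
  refine Finset.sum_congr rfl fun u _ => ?_
  rw [Set.indicator_indicator, Set.indicator_indicator, hfiber u, div_div]

/-- conditional (on X = x') inverse-propensity weighting identity. -/
theorem stmt8 {ιU ιT ιX : Type*} (p : Ω → ℝ) (hp : IsProb p)
    (U : Ω → ιU) (T : Ω → ιT) (X : Ω → ιX) (Y Ystar : Ω → ℝ)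
    (t' : ιT) (x' : ιX)
    (hXpos : Pr p {ω | X ω = x'} > 0)
    (hpos : ∀ u : ιU, Pr p {ω | U ω = u} > 0 →
      cPr p {ω | T ω = t'} {ω | U ω = u} > 0)
    -- X conditionally independent of (T, Y) given U
    (hCI : ∀ (u : ιU) (x : ιX) (t : ιT) (y : ℝ), Pr p {ω | U ω = u} > 0 →
      cPr p ({ω | X ω = x} ∩ {ω | T ω = t} ∩ {ω | Y ω = y}) {ω | U ω = u} =
      cPr p {ω | X ω = x} {ω | U ω = u} *
        cPr p ({ω | T ω = t} ∩ {ω | Y ω = y}) {ω | U ω = u})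
    -- individual-level valuation for the counterfactual outcome Y*
    (hconsist : ∀ (u : ιU), Pr p ({ω | X ω = x'} ∩ {ω | U ω = u}) > 0 → ∀ y : ℝ,
      cPr p {ω | Ystar ω = y} ({ω | X ω = x'} ∩ {ω | U ω = u}) =
        cPr p {ω | Ystar ω = y} {ω | U ω = u} ∧
      cPr p {ω | Ystar ω = y} {ω | U ω = u} =
        cPr p {ω | Y ω = y} ({ω | T ω = t'} ∩ {ω | U ω = u})) :
    cEx p Ystar {ω | X ω = x'} =
      Ex p (fun ω => Y ω * (if T ω = t' ∧ X ω = x' then 1 else 0) /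
        (cPr p {ω' | T ω' = t'} {ω' | U ω' = U ω} * Pr p {ω' | X ω' = x'})) :=
  stmt8_general p hp U T X Y Ystar t' x' hCI hconsist
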